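/- Let L be a symmetric real n×n matrix with eigendecomposition L = Σ_{k=1}^{n-1} λ_k v_k v_kᵀ where λ_k ≠ 0 and v_1,...,v_{n-1}, v_n = (1/√n)·1_n form an orthonormal basis. Let U = Σ_{k=1}^{n-1} λ_k^{-1} u_k u_kᵀ where u_k is obtained from v_k by subtracting the i-th coordinate v_{k,i} from every coordinate except the i-th. Then the submatrix U_{-i,-i} (deleting row and column i) is the inverse of L_{-i,-i}. -/
import Mathlib


open Matrix
open scoped Classical

/-- Let `L = Σ_{k ≠ n₀} λ_k v_k v_kᵀ` with the `λ_k` nonzero and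
`v_1, …, v_{n-1}, v_{n₀} = (1/√n)·1` an orthonormal basis. Let
`U = Σ_{k ≠ n₀} λ_k⁻¹ u_k u_kᵀ` where `u_k` subtracts the `i`-th coordinate of `v_k`
from every coordinate except the `i`-th. Then `U_{-i,-i}` is the inverse of
`L_{-i,-i}`. -/
theorem stmt11 (n : ℕ) (hn : 0 < n) (lam : Fin n → ℝ) (v : Fin n → Fin n → ℝ)
    (n₀ : Fin n) (i : Fin n)
    (horth : ∀ k l, v k ⬝ᵥ v l = if k = l then (1 : ℝ) else 0)
    (hvn : v n₀ = fun _ => 1 / Real.sqrt n)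
    (hlam : ∀ k, k ≠ n₀ → lam k ≠ 0)
    (L U : Matrix (Fin n) (Fin n) ℝ)
    (hL : L = ∑ k ∈ Finset.univ.erase n₀, lam k • vecMulVec (v k) (v k))
    (u : Fin n → Fin n → ℝ)
    (hu : ∀ k a, u k a = if a = i then v k a else v k a - v k i)
    (hU : U = ∑ k ∈ Finset.univ.erase n₀, (lam k)⁻¹ • vecMulVec (u k) (u k)) :
    (U.submatrix (fun a : {a : Fin n // a ≠ i} => (a : Fin n))
        (fun a : {a : Fin n // a ≠ i} => (a : Fin n))) *
      (L.submatrix (fun a : {a : Fin n // a ≠ i} => (a : Fin n))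
        (fun a : {a : Fin n // a ≠ i} => (a : Fin n))) = 1 := by
  have hnR : (0:ℝ) < (n:ℝ) := by exact_mod_cast hn
  have hsqrt : Real.sqrt n ≠ 0 := by positivity
  -- column orthonormality
  have hcol : ∀ a b, (∑ k, v k a * v k b) = if a = b then (1:ℝ) else 0 := by
    set V : Matrix (Fin n) (Fin n) ℝ := Matrix.of v with hV
    have h1 : V * Vᵀ = 1 := by
      ext k l
      simpa [Matrix.mul_apply, Matrix.one_apply, V, dotProduct] using horth k l
    have h2 : Vᵀ * V = 1 := mul_eq_one_comm.mp h1
    intro a b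
    have := congrFun (congrFun h2 a) b
    simpa [Matrix.mul_apply, Matrix.one_apply, V, mul_comm] using this
  -- sum of entries of v l is 0 for l ≠ n₀
  have hsumv : ∀ l, l ≠ n₀ → (∑ c, v l c) = 0 := by
    intro l hl
    have h := horth l n₀
    rw [if_neg hl] at h
    have : (∑ c, v l c) * (1 / Real.sqrt n) = 0 := by
      rw [Finset.sum_mul]
      simpa [dotProduct, hvn] using h
    rcases mul_eq_zero.mp this with h' | h'
    · exact h'
    · exact absurd h' (by simp [hsqrt])
  have hvn0 : ∀ c, v n₀ c = 1 / Real.sqrt n := fun c => by rw [hvn]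
  have hsq : (1 / Real.sqrt n) * (1 / Real.sqrt n) = 1 / n := by
    rw [div_mul_div_comm, one_mul, Real.mul_self_sqrt (le_of_lt hnR)]
  -- key dot product:  u k ⬝ v l = δ + v k i * v l i
  have hkey : ∀ k l, k ≠ n₀ → l ≠ n₀ →
      (∑ c, u k c * v l c) = (if k = l then (1:ℝ) else 0) + v k i * v l i := by
    intro k l hk hl
    have : ∀ c, u k c * v l c = v k c * v l c - (v k i * v l c - if c = i then v k i * v l c else 0) := by
      intro c
      rw [hu]; split_ifs with hc
      · subst hc; ring
      · ring
    rw [Finset.sum_congr rfl fun c _ => this c]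
    rw [Finset.sum_sub_distrib, Finset.sum_sub_distrib]
    have e1 : (∑ c, v k c * v l c) = if k = l then (1:ℝ) else 0 := by
      simpa [dotProduct] using horth k l
    have e2 : (∑ c, v k i * v l c) = 0 := by
      rw [← Finset.mul_sum, hsumv l hl, mul_zero]
    have e3 : (∑ c, if c = i then v k i * v l i else 0) = v k i * v l i := by
      simp
    have e4 : (∑ c, if c = i then v k i * v l c else 0) = v k i * v l i := by
      rw [Finset.sum_ite_eq' Finset.univ i (fun c => v k i * v l c)]
      simp
    rw [e1, e2, e4]
    ring
  have hui : ∀ k, u k i = v k i := fun k => by simp [hu]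
  -- the full-sum computation
  have hUL : ∀ a b : Fin n,
      (∑ c, U a c * L c b)
        = (∑ k ∈ Finset.univ.erase n₀, u k a * v k b) + U a i * L i b := by
    intro a b
    have hUe : ∀ a c, U a c = ∑ k ∈ Finset.univ.erase n₀, (lam k)⁻¹ * (u k a * u k c) := by
      intro a c; rw [hU]; simp [Matrix.sum_apply, vecMulVec_apply]
    have hLe : ∀ c b, L c b = ∑ l ∈ Finset.univ.erase n₀, lam l * (v l c * v l b) := by
      intro c b; rw [hL]; simp [Matrix.sum_apply, vecMulVec_apply]
    calc ∑ c, U a c * L c b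
        = ∑ c, ∑ k ∈ Finset.univ.erase n₀, ∑ l ∈ Finset.univ.erase n₀,
            ((lam k)⁻¹ * (u k a * u k c)) * (lam l * (v l c * v l b)) := by
          refine Finset.sum_congr rfl fun c _ => ?_
          rw [hUe, hLe, Finset.sum_mul_sum]
      _ = ∑ k ∈ Finset.univ.erase n₀, ∑ l ∈ Finset.univ.erase n₀,
            ((lam k)⁻¹ * u k a) * (lam l * v l b) * (∑ c, u k c * v l c) := by
          rw [Finset.sum_comm]
          refine Finset.sum_congr rfl fun k _ => ?_
          rw [Finset.sum_comm]
          refine Finset.sum_congr rfl fun l _ => ?_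
          rw [Finset.mul_sum]
          exact Finset.sum_congr rfl fun c _ => by ring
      _ = ∑ k ∈ Finset.univ.erase n₀, ∑ l ∈ Finset.univ.erase n₀,
            (((lam k)⁻¹ * u k a) * (lam l * v l b) * (if k = l then (1:ℝ) else 0)
              + ((lam k)⁻¹ * (u k a * v k i)) * (lam l * (v l i * v l b))) := by
          refine Finset.sum_congr rfl fun k hk => Finset.sum_congr rfl fun l hl => ?_
          rw [hkey k l (Finset.ne_of_mem_erase hk) (Finset.ne_of_mem_erase hl)]
          ring
      _ = (∑ k ∈ Finset.univ.erase n₀, u k a * v k b) + U a i * L i b := by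
          rw [Finset.sum_congr rfl fun k (_ : k ∈ _) => Finset.sum_add_distrib]
          rw [Finset.sum_add_distrib]
          congr 1
          · refine Finset.sum_congr rfl fun k hk => ?_
            simp only [mul_ite, mul_one, mul_zero]
            rw [Finset.sum_ite_eq, if_pos hk]
            have hl0 := hlam k (Finset.ne_of_mem_erase hk)
            field_simp
          · rw [hUe a i, hLe i b, Finset.sum_mul_sum]
            refine Finset.sum_congr rfl fun k _ => Finset.sum_congr rfl fun l _ => ?_
            rw [hui]
  -- ∑_{k≠n₀} u k a * v k b = δ_{ab}   for a,b ≠ i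
  have hW : ∀ a b : Fin n, a ≠ i → b ≠ i →
      (∑ k ∈ Finset.univ.erase n₀, u k a * v k b) = if a = b then (1:ℝ) else 0 := by
    intro a b ha hb
    have h1 : ∀ k, u k a * v k b = v k a * v k b - v k i * v k b := by
      intro k; rw [hu]; simp [ha]; ring
    rw [Finset.sum_congr rfl fun k _ => h1 k, Finset.sum_sub_distrib]
    have e1 : (∑ k ∈ Finset.univ.erase n₀, v k a * v k b)
        = (if a = b then (1:ℝ) else 0) - 1 / n := by
      rw [Finset.sum_erase_eq_sub (Finset.mem_univ n₀), hcol, hvn0, hvn0, hsq]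
    have e2 : (∑ k ∈ Finset.univ.erase n₀, v k i * v k b) = - (1 / n) := by
      rw [Finset.sum_erase_eq_sub (Finset.mem_univ n₀), hcol, hvn0, hvn0, hsq,
        if_neg (fun h => hb h.symm)]
      ring
    rw [e1, e2]; ring
  -- finish
  ext a b
  rw [Matrix.mul_apply, Matrix.one_apply]
  have hsum : (∑ c : {a : Fin n // a ≠ i}, U a c * L c b)
      = ∑ c ∈ Finset.univ.erase i, U a c * L c b :=
    (Finset.sum_subtype (p := fun a : Fin n => a ≠ i) (Finset.univ.erase i)
      (fun x => by simp) (fun c => U a c * L c b)).symm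
  simp only [Matrix.submatrix_apply]
  rw [hsum, Finset.sum_erase_eq_sub (Finset.mem_univ i), hUL, hW _ _ a.2 b.2]
  rw [add_sub_cancel_right, if_congr Subtype.coe_inj rfl rfl]
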